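/- Let τ₂₁ denote the flip operator on Mat_n(ℂ) ⊗ Mat_n(ℂ), realized on n²×n² Kronecker-product matrices by (τ₂₁ M)_{(i,j),(p,q)} = M_{(j,i),(q,p)}, so that τ₂₁(A ⊗ B) = B ⊗ A. Then for all v, x₁, x₂ ∈ ℂ such that θ̄(x₂−x₁) ≠ 0 and θ̄(v + (d/n)(kτ + l)) ≠ 0 and θ̄(−v + (d/n)(kτ + l)) ≠ 0 for every (k,l) ∈ {1,…,n}², the solution r is skew-symmetric: r(v; x₁, x₂) = −τ₂₁(r(−v; x₂, x₁)). -/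

import Mathlib

open Complex Matrix
open scoped Kronecker

noncomputable section

/-- `ε = exp(2πi d/n)`. -/
def eps (n d : ℕ) : ℂ := Complex.exp (2 * Real.pi * Complex.I * d / n)

/-- The diagonal matrix `X = diag(1, ε, ε², …, ε^{n−1})`. -/
def Xmat (n d : ℕ) : Matrix (Fin n) (Fin n) ℂ :=
  Matrix.diagonal fun i => eps n d ^ (i : ℕ)

/-- The cyclic shift matrix `Y` with `Y_{i,j} = 1` iff `j ≡ i+1 (mod n)`. -/
def Ymat (n : ℕ) : Matrix (Fin n) (Fin n) ℂ :=
  Matrix.of fun i j => if (j : ℕ) = ((i : ℕ) + 1) % n then 1 else 0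

/-- `Z_{(k,l)} = Y^k X^{−l}`. -/
def Zmat (n d : ℕ) (k l : ℕ) : Matrix (Fin n) (Fin n) ℂ :=
  Ymat n ^ k * (Xmat n d)⁻¹ ^ l

/-- `Z^∨_{(k,l)} = (1/n) X^l Y^{−k}`. -/
def Zdual (n d : ℕ) (k l : ℕ) : Matrix (Fin n) (Fin n) ℂ :=
  (n : ℂ)⁻¹ • (Xmat n d ^ l * (Ymat n)⁻¹ ^ k)

/-- The third Jacobi theta function `θ(z) = ∑_{m ∈ ℤ} exp(πiτm² + 2πimz)`. -/
def theta3 (τ z : ℂ) : ℂ :=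
  ∑' m : ℤ, Complex.exp (Real.pi * Complex.I * τ * (m : ℂ) ^ 2 +
    2 * Real.pi * Complex.I * (m : ℂ) * z)

/-- The first Jacobi theta function
`θ̄(z) = 2 exp(πiτ/4) ∑_{m ≥ 0} (−1)^m exp(πiτ m(m+1)) sin((2m+1)πz)`. -/
def theta1 (τ z : ℂ) : ℂ :=
  2 * Complex.exp (Real.pi * Complex.I * τ / 4) *
    ∑' m : ℕ, (-1 : ℂ) ^ m * Complex.exp (Real.pi * Complex.I * τ * (m : ℂ) * ((m : ℂ) + 1)) *
      Complex.sin ((2 * (m : ℂ) + 1) * Real.pi * z)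

/-- The Kronecker elliptic function `σ(u, z) = θ̄′(0) θ̄(u+z) / (θ̄(u) θ̄(z))`. -/
def sigmaK (τ u z : ℂ) : ℂ :=
  deriv (theta1 τ) 0 * theta1 τ (u + z) / (theta1 τ u * theta1 τ z)

/-- The elliptic solution `r(v; x₁, x₂)` of the AYBE, as an `n²×n²` matrix. -/
def rmat (n d : ℕ) (τ : ℂ) (v x₁ x₂ : ℂ) :
    Matrix (Fin n × Fin n) (Fin n × Fin n) ℂ :=
  ∑ p : Fin n × Fin n,
    (Complex.exp (2 * Real.pi * Complex.I * d * ((p.1.1 : ℂ) + 1) * (x₂ - x₁) / n) *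
      sigmaK τ (v + ((d : ℂ) / n) * (((p.1.1 : ℂ) + 1) * τ + ((p.2.1 : ℂ) + 1))) (x₂ - x₁)) •
      (Zdual n d (p.1.1 + 1) (p.2.1 + 1) ⊗ₖ Zmat n d (p.1.1 + 1) (p.2.1 + 1))

/-- The flip operator `τ₂₁` on `Mat_n(ℂ) ⊗ Mat_n(ℂ)`, with `τ₂₁(A ⊗ B) = B ⊗ A`. -/
def flipTensor (n : ℕ) (M : Matrix (Fin n × Fin n) (Fin n × Fin n) ℂ) :
    Matrix (Fin n × Fin n) (Fin n × Fin n) ℂ :=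
  Matrix.of fun a b => M (a.2, a.1) (b.2, b.1)

open scoped Real

/-!
Writing `θ̄` through `jacobiTheta₂` shows that it is odd, antiperiodic under `z ↦ z + 1` and
quasi-periodic under `z ↦ z + τ`. Hence `σ(u, z)` is odd in `(u, z)` and
`σ(u + aτ + b, z) = e^{-2πiaz} σ(u, z)`, and this factor exactly absorbs the exponential prefactor
when `(k, l)` is replaced by `(-k, -l)` modulo `n`: the coefficient of index `(k, l)` in
`r(v; x₁, x₂)` is minus the coefficient of index `(-k, -l)` in `r(-v; x₂, x₁)`. On the matrix side
`Z^∨_α ⊗ Z_α = Z_{-α} ⊗ Z^∨_{-α}`, checked entrywise, so reindexing the sum by `α ↦ -α` gives the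
skew-symmetry.
-/

section Theta

variable {τ : ℂ}

lemma theta1_eq_jacobiTheta₂ (hτ : 0 < τ.im) (z : ℂ) :
    theta1 τ z = -I * cexp (π * I * τ / 4) * cexp (π * I * z) *
      jacobiTheta₂ (z + (τ + 1) / 2) τ := by
  set w := z + (τ + 1) / 2
  have hsum : Summable (jacobiTheta₂_term · w τ) :=
    (summable_jacobiTheta₂_term_iff w τ).mpr hτ
  have hsign (m : ℕ) : (-1 : ℂ) ^ m = cexp (m * (π * I)) := by
    rw [Complex.exp_nat_mul, Complex.exp_pi_mul_I]
  have hpos (m : ℕ) : jacobiTheta₂_term m w τ * cexp (π * I * z) =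
      (-1) ^ m * cexp (π * I * τ * m * (m + 1)) * cexp ((2 * m + 1) * π * z * I) := by
    rw [hsign, jacobiTheta₂_term, ← Complex.exp_add, ← Complex.exp_add, ← Complex.exp_add]
    congr 1
    push_cast
    ring
  -- the two exponents differ by `2πi (m + 1)`
  have hneg (m : ℕ) : jacobiTheta₂_term (-(m + 1 : ℤ)) w τ * cexp (π * I * z) =
      -((-1) ^ m * cexp (π * I * τ * m * (m + 1)) * cexp (-((2 * m + 1) * π * z) * I)) := by
    rw [hsign, jacobiTheta₂_term, ← Complex.exp_add, ← Complex.exp_add, ← Complex.exp_add]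
    conv_rhs => rw [← neg_one_mul, ← Complex.exp_pi_mul_I, ← Complex.exp_add]
    rw [Complex.exp_eq_exp_iff_exists_int]
    exact ⟨-(m + 1), by push_cast; ring⟩
  have hterm (m : ℕ) :
      (-1 : ℂ) ^ m * cexp (π * I * τ * m * (m + 1)) * Complex.sin ((2 * m + 1) * π * z) =
      (jacobiTheta₂_term m w τ + jacobiTheta₂_term (-(m + 1 : ℤ)) w τ) *
        (cexp (π * I * z) * (-I / 2)) := by
    rw [Complex.sin]
    linear_combination (I / 2) * hpos m + (I / 2) * hneg m
  rw [theta1, tsum_congr hterm, tsum_mul_right, tsum_nat_add_neg_add_one hsum, jacobiTheta₂]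
  ring

lemma theta1_neg (z : ℂ) : theta1 τ (-z) = -theta1 τ z := by
  simp only [theta1, mul_neg, Complex.sin_neg, tsum_neg]

lemma theta1_antiperiodic (hτ : 0 < τ.im) : Function.Antiperiodic (theta1 τ) 1 := by
  intro z
  rw [theta1_eq_jacobiTheta₂ hτ, theta1_eq_jacobiTheta₂ hτ, add_right_comm z,
    jacobiTheta₂_add_left, mul_add, mul_one, Complex.exp_add, Complex.exp_pi_mul_I]
  ring

lemma theta1_add_tau (hτ : 0 < τ.im) (z : ℂ) :
    theta1 τ (z + τ) = -cexp (-(π * I * τ) - 2 * π * I * z) * theta1 τ z := by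
  rw [theta1_eq_jacobiTheta₂ hτ, theta1_eq_jacobiTheta₂ hτ, add_right_comm z,
    jacobiTheta₂_add_left']
  have h : cexp (π * I * (z + τ)) * cexp (-π * I * (τ + 2 * (z + (τ + 1) / 2))) =
      -cexp (-(π * I * τ) - 2 * π * I * z) * cexp (π * I * z) := by
    rw [← Complex.exp_add]
    conv_rhs => rw [neg_mul, ← Complex.exp_add, ← neg_one_mul, ← Complex.exp_pi_mul_I,
      ← Complex.exp_add]
    rw [Complex.exp_eq_exp_iff_exists_int]
    exact ⟨-1, by push_cast; ring⟩
  linear_combination (-I * cexp (π * I * τ / 4) * jacobiTheta₂ (z + (τ + 1) / 2) τ) * h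

lemma sigmaK_neg (u z : ℂ) : sigmaK τ (-u) (-z) = -sigmaK τ u z := by
  rw [sigmaK, sigmaK, ← neg_add, theta1_neg, theta1_neg, theta1_neg, neg_mul_neg, mul_neg,
    neg_div]

lemma sigmaK_periodic (hτ : 0 < τ.im) (z : ℂ) : Function.Periodic (sigmaK τ · z) 1 := by
  intro u
  simp only [sigmaK, add_right_comm u, theta1_antiperiodic hτ _, neg_mul, mul_neg, neg_div_neg_eq]

lemma sigmaK_add_tau (hτ : 0 < τ.im) (u z : ℂ) :
    sigmaK τ (u + τ) z = cexp (-(2 * π * I * z)) * sigmaK τ u z := by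
  set c := -cexp (-(π * I * τ) - 2 * π * I * u)
  have hc : c ≠ 0 := neg_ne_zero.mpr (Complex.exp_ne_zero _)
  have hshift : theta1 τ (u + τ + z) = c * (cexp (-(2 * π * I * z)) * theta1 τ (u + z)) := by
    rw [add_right_comm, theta1_add_tau hτ, ← mul_assoc, neg_mul, neg_mul, ← Complex.exp_add]
    ring_nf
  rw [sigmaK, sigmaK, hshift, theta1_add_tau hτ, mul_assoc (-_), mul_left_comm,
    mul_div_mul_left _ _ hc]
  ring

lemma sigmaK_add_nat_mul_tau (hτ : 0 < τ.im) (u z : ℂ) (a : ℕ) :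
    sigmaK τ (u + a * τ) z = cexp (-(2 * π * I * a * z)) * sigmaK τ u z := by
  induction a with
  | zero => simp
  | succ a ih =>
    rw [Nat.cast_succ, add_one_mul, ← add_assoc, sigmaK_add_tau hτ, ih, ← mul_assoc,
      ← Complex.exp_add]
    ring_nf

lemma sigmaK_add_nat_mul_tau_add_nat (hτ : 0 < τ.im) (u z : ℂ) (a b : ℕ) :
    sigmaK τ (u + (a * τ + b)) z = cexp (-(2 * π * I * a * z)) * sigmaK τ u z := by
  have hb := (sigmaK_periodic hτ z).nat_mul b (u + a * τ)
  rw [mul_one] at hb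
  rw [← add_assoc, hb, sigmaK_add_nat_mul_tau hτ]

end Theta

section Matrices

variable {n : ℕ}

lemma natCast_fin_val_inj {i j : Fin n} :
    ((i : ℕ) : ZMod n) = ((j : ℕ) : ZMod n) ↔ i = j := by
  rw [ZMod.natCast_eq_natCast_iff', Nat.mod_eq_of_lt i.isLt, Nat.mod_eq_of_lt j.isLt, Fin.val_inj]

lemma Ymat_apply (i j : Fin n) :
    Ymat n i j = if ((j : ℕ) : ZMod n) = (i : ℕ) + 1 then 1 else 0 := by
  simp_rw [Ymat, of_apply, ← Nat.cast_succ, ZMod.natCast_eq_natCast_iff', Nat.mod_eq_of_lt j.isLt]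

lemma Xmat_pow (d l : ℕ) :
    Xmat n d ^ l = diagonal fun i : Fin n => eps n d ^ (l * (i : ℕ)) := by
  simp [Xmat, diagonal_pow, Pi.pow_def, ← pow_mul, mul_comm]

variable [NeZero n]

lemma eps_pow_self (d : ℕ) : eps n d ^ n = 1 := by
  rw [eps, ← Complex.exp_nat_mul, mul_div_cancel₀ _ (NeZero.ne (n : ℂ)), mul_comm,
    Complex.exp_nat_mul, Complex.exp_two_pi_mul_I, one_pow]

lemma eps_pow_eq_pow_of_natCast_eq (d : ℕ) {a b : ℕ} (h : (a : ZMod n) = b) :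
    eps n d ^ a = eps n d ^ b := by
  rw [pow_eq_pow_mod a (eps_pow_self d), pow_eq_pow_mod b (eps_pow_self d),
    (ZMod.natCast_eq_natCast_iff' a b n).mp h]

lemma Ymat_pow_apply (k : ℕ) (i j : Fin n) :
    (Ymat n ^ k) i j = if ((j : ℕ) : ZMod n) = (i : ℕ) + k then 1 else 0 := by
  induction k generalizing j with
  | zero => simp [Matrix.one_apply, natCast_fin_val_inj, eq_comm]
  | succ k ih =>
    obtain ⟨t₀, ht₀⟩ : ∃ t : Fin n, ((t : ℕ) : ZMod n) = (i : ℕ) + k :=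
      ⟨⟨_, ZMod.val_lt _⟩, ZMod.natCast_zmod_val _⟩
    simp only [pow_succ, mul_apply, ih, ← ht₀, natCast_fin_val_inj, ite_mul, one_mul, zero_mul,
      Finset.sum_ite_eq', Finset.mem_univ, if_true, Ymat_apply]
    rw [ht₀, Nat.cast_succ, add_assoc]

lemma Ymat_pow_self : Ymat n ^ n = 1 := by
  ext i j
  simp [Ymat_pow_apply, Matrix.one_apply, natCast_fin_val_inj, eq_comm]

lemma Xmat_pow_self (d : ℕ) : Xmat n d ^ n = 1 := by
  simp [Xmat_pow, pow_mul, eps_pow_self]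

lemma inv_Xmat_pow (d l : ℕ) :
    (Xmat n d)⁻¹ ^ l = diagonal fun i : Fin n => eps n d ^ ((n - 1) * l * (i : ℕ)) := by
  rw [inv_eq_right_inv (mul_pow_sub_one (NeZero.ne n) _ |>.trans (Xmat_pow_self d)), ← pow_mul,
    Xmat_pow]

lemma inv_Ymat_pow_apply (k : ℕ) (i j : Fin n) :
    ((Ymat n)⁻¹ ^ k) i j = if ((j : ℕ) : ZMod n) = (i : ℕ) - k then 1 else 0 := by
  rw [inv_eq_right_inv (mul_pow_sub_one (NeZero.ne n) _ |>.trans Ymat_pow_self), ← pow_mul,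
    Ymat_pow_apply]
  simp [Nat.cast_sub NeZero.one_le, sub_eq_add_neg]

lemma Zmat_apply (d k l : ℕ) (i j : Fin n) :
    Zmat n d k l i j =
      if ((j : ℕ) : ZMod n) = (i : ℕ) + k then eps n d ^ ((n - 1) * l * (j : ℕ)) else 0 := by
  rw [Zmat, inv_Xmat_pow, mul_diagonal, Ymat_pow_apply, ite_mul, one_mul, zero_mul]

lemma Zdual_apply (d k l : ℕ) (i j : Fin n) :
    Zdual n d k l i j = (n : ℂ)⁻¹ *
      if ((j : ℕ) : ZMod n) = (i : ℕ) - k then eps n d ^ (l * (i : ℕ)) else 0 := by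
  rw [Zdual, Matrix.smul_apply, Xmat_pow, diagonal_mul, inv_Ymat_pow_apply, mul_ite, mul_one,
    mul_zero, smul_eq_mul]

lemma Zdual_kronecker_Zmat_of_add_eq_zero (d : ℕ) {k l k' l' : ℕ} (hk : (k + k' : ZMod n) = 0)
    (hl : (l + l' : ZMod n) = 0) :
    Zdual n d k l ⊗ₖ Zmat n d k l = Zmat n d k' l' ⊗ₖ Zdual n d k' l' := by
  have hk' : (k' : ZMod n) = -k := by linear_combination hk
  ext ⟨i₁, i₂⟩ ⟨j₁, j₂⟩
  simp only [kroneckerMap_apply, Zmat_apply, Zdual_apply, hk', sub_neg_eq_add, ← sub_eq_add_neg]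
  by_cases h₁ : ((j₁ : ℕ) : ZMod n) = (i₁ : ℕ) - k
  · by_cases h₂ : ((j₂ : ℕ) : ZMod n) = (i₂ : ℕ) + k
    · rw [if_pos h₁, if_pos h₂, if_pos h₁, if_pos h₂]
      have hexp : eps n d ^ (l * (i₁ : ℕ)) * eps n d ^ ((n - 1) * l * (j₂ : ℕ)) =
          eps n d ^ ((n - 1) * l' * (j₁ : ℕ)) * eps n d ^ (l' * (i₂ : ℕ)) := by
        rw [← pow_add, ← pow_add]
        apply eps_pow_eq_pow_of_natCast_eq
        push_cast [Nat.cast_sub NeZero.one_le, ZMod.natCast_self, h₁, h₂]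
        linear_combination ((i₁ : ℕ) - (i₂ : ℕ) - k : ZMod n) * hl
      linear_combination (n : ℂ)⁻¹ * hexp
    · simp [h₁, h₂]
  · simp [h₁]

end Matrices

section Reindexing

variable {n : ℕ} [NeZero n]

/-- On the summation index `k = i + 1 ∈ {1, …, n}` this is `k ↦ -k` modulo `n`. -/
def oppositeIndex (i : Fin n) : Fin n :=
  ⟨(-((i : ℕ) + 1 : ZMod n) - 1).val, ZMod.val_lt _⟩

lemma natCast_oppositeIndex_add_one (i : Fin n) :
    (((oppositeIndex i : ℕ) + 1 : ℕ) : ZMod n) = -((i : ℕ) + 1 : ℕ) := by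
  rw [Nat.cast_succ, oppositeIndex, ZMod.natCast_zmod_val]
  push_cast
  ring

lemma natCast_add_oppositeIndex (i : Fin n) :
    (((i : ℕ) + 1 : ℕ) : ZMod n) + (((oppositeIndex i : ℕ) + 1 : ℕ) : ZMod n) = 0 := by
  rw [natCast_oppositeIndex_add_one, add_neg_cancel]

lemma exists_add_oppositeIndex_eq_mul (i : Fin n) :
    ∃ a : ℕ, ((i : ℕ) + 1) + ((oppositeIndex i : ℕ) + 1) = n * a :=
  (ZMod.natCast_eq_zero_iff _ n).mp (by rw [Nat.cast_add]; exact natCast_add_oppositeIndex i)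

lemma oppositeIndex_involutive : Function.Involutive (oppositeIndex (n := n)) := by
  intro i
  rw [← natCast_fin_val_inj, ← add_left_inj 1]
  have h := natCast_oppositeIndex_add_one (oppositeIndex i)
  rw [natCast_oppositeIndex_add_one i, neg_neg] at h
  exact_mod_cast h

end Reindexing

section FlipTensor

variable {n : ℕ}

lemma flipTensor_sum {ι : Type*} (s : Finset ι)
    (M : ι → Matrix (Fin n × Fin n) (Fin n × Fin n) ℂ) :
    flipTensor n (∑ i ∈ s, M i) = ∑ i ∈ s, flipTensor n (M i) := by
  ext
  simp [flipTensor, Matrix.sum_apply]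

lemma flipTensor_smul (c : ℂ) (M : Matrix (Fin n × Fin n) (Fin n × Fin n) ℂ) :
    flipTensor n (c • M) = c • flipTensor n M := by
  ext
  simp [flipTensor]

lemma flipTensor_kronecker (A B : Matrix (Fin n) (Fin n) ℂ) :
    flipTensor n (A ⊗ₖ B) = B ⊗ₖ A := by
  ext
  simp [flipTensor, mul_comm]

end FlipTensor

def rmatCoeff (n d : ℕ) (τ v z k l : ℂ) : ℂ :=
  cexp (2 * π * I * d * k * z / n) * sigmaK τ (v + ((d : ℂ) / n) * (k * τ + l)) z

lemma rmat_eq_sum (n d : ℕ) (τ v x₁ x₂ : ℂ) :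
    rmat n d τ v x₁ x₂ = ∑ p : Fin n × Fin n,
      rmatCoeff n d τ v (x₂ - x₁) ((p.1 : ℕ) + 1 : ℕ) ((p.2 : ℕ) + 1 : ℕ) •
        (Zdual n d (p.1 + 1) (p.2 + 1) ⊗ₖ Zmat n d (p.1 + 1) (p.2 + 1)) := by
  simp only [rmat, rmatCoeff, Nat.cast_succ]

lemma rmatCoeff_eq_neg {n : ℕ} [NeZero n] (d : ℕ) {τ : ℂ} (hτ : 0 < τ.im)
    {k l k' l' : ℂ} {a b : ℕ} (hk : k + k' = n * a) (hl : l + l' = n * b) (v z : ℂ) :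
    rmatCoeff n d τ v z k l = -rmatCoeff n d τ (-v) (-z) k' l' := by
  obtain rfl : k = n * a - k' := eq_sub_of_add_eq hk
  obtain rfl : l = n * b - l' := eq_sub_of_add_eq hl
  have hn : (n : ℂ) ≠ 0 := NeZero.ne _
  have hu : v + (d / n) * ((n * a - k') * τ + (n * b - l')) =
      -(-v + (d / n) * (k' * τ + l')) + ((d * a : ℕ) * τ + (d * b : ℕ)) := by
    push_cast
    field_simp
    ring
  have hexp :
      cexp (2 * π * I * d * (n * a - k') * z / n) * cexp (-(2 * π * I * (d * a : ℕ) * z)) =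
        cexp (2 * π * I * d * k' * -z / n) := by
    rw [← Complex.exp_add]
    congr 1
    push_cast
    field_simp
    ring
  have hodd := sigmaK_neg (τ := τ) (-v + (d / n) * (k' * τ + l')) (-z)
  rw [neg_neg] at hodd
  rw [rmatCoeff, rmatCoeff, hu, sigmaK_add_nat_mul_tau_add_nat hτ, hodd, ← hexp]
  ring

theorem stmt14_general (n d : ℕ) (hdn : d < n)
    (τ : ℂ) (hτ : 0 < τ.im) (v x₁ x₂ : ℂ) :
    rmat n d τ v x₁ x₂ = -flipTensor n (rmat n d τ (-v) x₂ x₁) := by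
  have : NeZero n := ⟨(Nat.zero_lt_of_lt hdn).ne'⟩
  rw [rmat_eq_sum, rmat_eq_sum, flipTensor_sum, ← Finset.sum_neg_distrib, ← neg_sub x₂ x₁]
  refine Fintype.sum_equiv (oppositeIndex_involutive.toPerm.prodCongr
    oppositeIndex_involutive.toPerm) _ _ fun ⟨i, j⟩ => ?_
  obtain ⟨a, ha⟩ := exists_add_oppositeIndex_eq_mul i
  obtain ⟨b, hb⟩ := exists_add_oppositeIndex_eq_mul j
  simp only [Equiv.prodCongr_apply, Function.Involutive.coe_toPerm, Prod.map, flipTensor_smul,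
    flipTensor_kronecker, ← neg_smul]
  have hk : (((i : ℕ) + 1 : ℕ) : ℂ) + ((oppositeIndex i + 1 : ℕ) : ℂ) = n * a := by
    exact_mod_cast ha
  have hl : (((j : ℕ) + 1 : ℕ) : ℂ) + ((oppositeIndex j + 1 : ℕ) : ℂ) = n * b := by
    exact_mod_cast hb
  rw [rmatCoeff_eq_neg d hτ hk hl, Zdual_kronecker_Zmat_of_add_eq_zero d
    (natCast_add_oppositeIndex i) (natCast_add_oppositeIndex j)]

/-- The elliptic solution of AYBE is skew-symmetric: `r(v; x₁, x₂) = −τ₂₁(r(−v; x₂, x₁))`. -/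
theorem stmt14 (n d : ℕ) (hd : 0 < d) (hdn : d < n) (hcop : Nat.gcd d n = 1)
    (τ : ℂ) (hτ : 0 < τ.im) (v x₁ x₂ : ℂ)
    (hx : theta1 τ (x₂ - x₁) ≠ 0)
    (hpol : ∀ k l : ℕ, 1 ≤ k → k ≤ n → 1 ≤ l → l ≤ n →
      theta1 τ (v + ((d : ℂ) / n) * (k * τ + l)) ≠ 0 ∧
      theta1 τ (-v + ((d : ℂ) / n) * (k * τ + l)) ≠ 0) :
    rmat n d τ v x₁ x₂ = -flipTensor n (rmat n d τ (-v) x₂ x₁) :=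
  stmt14_general n d hdn τ hτ v x₁ x₂
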